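/- arXiv:2312.05088 — 3 statements merged into one kernel-verified Lean document; each statement's English description precedes it below -/
import Mathlib

section
/- Let p, q : ℝⁿ → [1,∞] be measurable exponents with p⁺ < ∞ and q⁺ < ∞. Then for every (f_j)_{j∈ℕ₀} ∈ ℓ^{q(·)}(L^{p(·)}), the function μ ↦ ρ_{ℓ^{q(·)}(L^{p(·)})}((f_j/μ)_j) is continuous on (0,∞). -/
/-!
Write `S(μ)` for the modular of `(f_j / μ)_j`. It is antitone in `μ`. Conversely, for `s ≥ 1`
the candidate `s^{q⁺} λ` for the `j`-th infimum at `s f_j` satisfies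
`(s^{q⁺} λ)^{1/q(x)} ≥ s λ^{1/q(x)}` almost everywhere, so `S(a) ≤ (b/a)^{q⁺} S(b)` for
`0 < a ≤ b`. Hence `S(μ₀) / c(μ) ≤ S(μ) ≤ c(μ) S(μ₀)` with `c(μ) = max(μ/μ₀, μ₀/μ)^{q⁺} → 1`,
which gives continuity in `ℝ≥0∞` (also where `S = ∞`).
-/

open MeasureTheory ENNReal Filter
open scoped SchwartzMap FourierTransform

noncomputable section

/-- Euclidean space ℝⁿ. -/
abbrev En (n : ℕ) := EuclideanSpace ℝ (Fin n)

/-- `ω_p(t)`: `t^p` for finite `p`; for `p = ∞` it is `0` if `t ≤ 1` and `∞` otherwise. -/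
def omegaP (p t : ℝ≥0∞) : ℝ≥0∞ :=
  if p = ∞ then (if t ≤ 1 then 0 else ∞) else t ^ p.toReal

/-- Variable exponent modular `ρ_{p(·)}` on nonnegative (ℝ≥0∞-valued) functions. -/
def rhoP {n : ℕ} (p : En n → ℝ≥0∞) (F : En n → ℝ≥0∞) : ℝ≥0∞ :=
  ∫⁻ x, omegaP (p x) (F x)

/-- Luxemburg norm for the variable exponent Lebesgue space. -/
def luxNorm {n : ℕ} (p : En n → ℝ≥0∞) (F : En n → ℝ≥0∞) : ℝ≥0∞ :=
  sInf {l : ℝ≥0∞ | 0 < l ∧ rhoP p (fun x => F x / l) ≤ 1}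

/-- The nonnegative absolute value of a real function, as an ℝ≥0∞-valued function. -/
def nnAbs {n : ℕ} (f : En n → ℝ) : En n → ℝ≥0∞ := fun x => ENNReal.ofReal |f x|

/-- Modular of the mixed Lebesgue-sequence space `ℓ^{q(·)}(L^{p(·)})`
(convention `λ^{1/∞} = λ^0 = 1`). -/
def mixedModular {n : ℕ} (q p : En n → ℝ≥0∞) (F : ℕ → En n → ℝ≥0∞) : ℝ≥0∞ :=
  ∑' j, sInf {l : ℝ≥0∞ | 0 < l ∧ rhoP p (fun x => F j x / l ^ ((q x)⁻¹).toReal) ≤ 1}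

/-- Quasi-norm of the mixed Lebesgue-sequence space `ℓ^{q(·)}(L^{p(·)})`. -/
def mixedNorm {n : ℕ} (q p : En n → ℝ≥0∞) (F : ℕ → En n → ℝ≥0∞) : ℝ≥0∞ :=
  sInf {m : ℝ≥0∞ | 0 < m ∧ mixedModular q p (fun j x => F j x / m) ≤ 1}

/-- `g` is locally log-Hölder continuous with constant `c`. -/
def LocLogHolder {n : ℕ} (c : ℝ) (g : En n → ℝ) : Prop :=
  0 < c ∧ ∀ x y : En n, |g x - g y| ≤ c / Real.log (Real.exp 1 + 1 / ‖x - y‖)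

/-- `g ∈ C^log_loc(ℝⁿ)`. -/
def ClogLoc {n : ℕ} (g : En n → ℝ) : Prop := ∃ c, LocLogHolder c g

/-- `g` is globally log-Hölder continuous: locally log-Hölder plus the log-Hölder
decay condition at infinity. -/
def GlobLogHolder {n : ℕ} (g : En n → ℝ) : Prop :=
  ClogLoc g ∧ ∃ c g_inf : ℝ, 0 < c ∧ ∀ x : En n, |g x - g_inf| ≤ c / Real.log (Real.exp 1 + ‖x‖)

/-- A measurable variable exponent `p : ℝⁿ → [1,∞]`. -/
def IsExponent {n : ℕ} (p : En n → ℝ≥0∞) : Prop := Measurable p ∧ ∀ x, 1 ≤ p x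

/-- `p ∈ 𝒫^log(ℝⁿ)`: a variable exponent with `1/p` globally log-Hölder continuous. -/
def Plog {n : ℕ} (p : En n → ℝ≥0∞) : Prop :=
  IsExponent p ∧ GlobLogHolder (fun x => ((p x)⁻¹).toReal)

/-- Convolution of two real functions. -/
def conv {n : ℕ} (φ f : En n → ℝ) (x : En n) : ℝ := ∫ y, φ (x - y) * f y

/-- Partial derivative in the `k`-th coordinate direction. -/
def pderiv {n : ℕ} (k : Fin n) (f : En n → ℝ) (x : En n) : ℝ :=
  fderiv ℝ f x (EuclideanSpace.single k 1)

/-- Besov quasi-norm with variable smoothness and integrability, relative to a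
system `(φ_j)_j`. -/
def besovNorm {n : ℕ} (φ : ℕ → En n → ℝ) (s : En n → ℝ) (q p : En n → ℝ≥0∞)
    (g : En n → ℝ) : ℝ≥0∞ :=
  mixedNorm q p (fun j x => ENNReal.ofReal ((2:ℝ) ^ ((j:ℝ) * s x) * |conv (φ j) g x|))

/-- A smooth dyadic resolution of unity `(ℱφ_j)_j`. -/
structure DyadicResolution (n : ℕ) where
  φ : ℕ → 𝓢(En n, ℝ)
  supp_zero : ∀ ξ : En n, 2 < ‖ξ‖ → 𝓕 (fun y => (φ 0 y : ℂ)) ξ = 0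
  supp_pos : ∀ j : ℕ, 0 < j → ∀ ξ : En n,
      (‖ξ‖ < (2:ℝ) ^ ((j:ℤ) - 1) ∨ (2:ℝ) ^ ((j:ℤ) + 1) < ‖ξ‖) →
      𝓕 (fun y => (φ j y : ℂ)) ξ = 0
  sum_one : ∀ ξ : En n, ∑' j, 𝓕 (fun y => (φ j y : ℂ)) ξ = 1

/-- The commutator `[V·∇, Δ_j]f` relative to a convolution kernel `φj`. -/
def commVf {n : ℕ} (φj : En n → ℝ) (V : Fin n → En n → ℝ) (f : En n → ℝ)
    (x : En n) : ℝ :=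
  ∑ k, (V k x * pderiv k (conv φj f) x - conv φj (fun y => V k y * pderiv k f y) x)

end

open Set Topology

theorem omegaP_monotone (p : ℝ≥0∞) : Monotone (omegaP p) := by
  intro s t hst
  unfold omegaP
  split_ifs with _ hs ht ht'
  · exact le_rfl
  · exact bot_le
  · exact absurd (hst.trans ht') hs
  · exact le_rfl
  · exact ENNReal.rpow_le_rpow hst ENNReal.toReal_nonneg

theorem rhoP_mono_ae {n : ℕ} (p : En n → ℝ≥0∞) {F G : En n → ℝ≥0∞} (hFG : F ≤ᵐ[volume] G) :
    rhoP p F ≤ rhoP p G :=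
  lintegral_mono_ae (hFG.mono fun x hx => omegaP_monotone (p x) hx)

noncomputable def mixedModularTerm {n : ℕ} (q p : En n → ℝ≥0∞) (F : En n → ℝ≥0∞) : ℝ≥0∞ :=
  sInf {l : ℝ≥0∞ | 0 < l ∧ rhoP p (fun x => F x / l ^ ((q x)⁻¹).toReal) ≤ 1}

theorem mixedModular_eq_tsum {n : ℕ} (q p : En n → ℝ≥0∞) (F : ℕ → En n → ℝ≥0∞) :
    mixedModular q p F = ∑' j, mixedModularTerm q p (F j) := rfl

theorem mixedModularTerm_mono {n : ℕ} (q p : En n → ℝ≥0∞) {F G : En n → ℝ≥0∞} (hFG : F ≤ G) :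
    mixedModularTerm q p F ≤ mixedModularTerm q p G :=
  sInf_le_sInf fun _ ⟨hl, hρ⟩ =>
    ⟨hl, (rhoP_mono_ae p (Eventually.of_forall fun x => ENNReal.div_le_div_right (hFG x) _)).trans hρ⟩

theorem one_le_toReal_mul_toReal_inv {Q r : ℝ≥0∞} (hQ : Q ≠ ∞) (hr0 : r ≠ 0) (hrQ : r ≤ Q) :
    1 ≤ Q.toReal * r⁻¹.toReal := by
  have hr : 0 < r.toReal := ENNReal.toReal_pos hr0 (ne_top_of_le_ne_top hQ hrQ)
  rw [ENNReal.toReal_inv, ← div_eq_mul_inv, one_le_div hr]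
  exact ENNReal.toReal_mono hQ hrQ

theorem mixedModularTerm_const_mul_le {n : ℕ} {q : En n → ℝ≥0∞} (p : En n → ℝ≥0∞) {Q : ℝ≥0∞}
    (hq : ∀ x, q x ≠ 0) (hQ : Q ≠ ∞) (hqQ : ∀ᵐ x ∂volume, q x ≤ Q) (G : En n → ℝ≥0∞)
    {s : ℝ≥0∞} (hs : 1 ≤ s) (hs' : s ≠ ∞) :
    mixedModularTerm q p (fun x => s * G x) ≤ s ^ Q.toReal * mixedModularTerm q p G := by
  have hs0 : s ≠ 0 := (zero_lt_one.trans_le hs).ne'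
  have hc0 : s ^ Q.toReal ≠ 0 := (ENNReal.rpow_pos (pos_iff_ne_zero.2 hs0) hs').ne'
  have hct : s ^ Q.toReal ≠ ∞ := ENNReal.rpow_ne_top_of_nonneg ENNReal.toReal_nonneg hs'
  rw [mul_comm, ← ENNReal.div_le_iff_le_mul (Or.inl hc0) (Or.inl hct)]
  refine le_sInf fun l ⟨hl, hρ⟩ => ENNReal.div_le_of_le_mul' ?_
  refine sInf_le ⟨ENNReal.mul_pos hc0 hl.ne', (rhoP_mono_ae p ?_).trans hρ⟩
  filter_upwards [hqQ] with x hx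
  set r := ((q x)⁻¹).toReal
  have hsr : s ≤ (s ^ Q.toReal) ^ r := by
    rw [← ENNReal.rpow_mul]
    calc s = s ^ (1 : ℝ) := (ENNReal.rpow_one s).symm
      _ ≤ s ^ (Q.toReal * r) := ENNReal.rpow_le_rpow_of_exponent_le hs
          (one_le_toReal_mul_toReal_inv hQ (hq x) hx)
  calc s * G x / (s ^ Q.toReal * l) ^ r
      ≤ s * G x / (s * l ^ r) := by
        rw [ENNReal.mul_rpow_of_nonneg _ _ ENNReal.toReal_nonneg]
        gcongr
    _ = G x / l ^ r := ENNReal.mul_div_mul_left _ _ hs0 hs'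

theorem mixedModular_mono {n : ℕ} (q p : En n → ℝ≥0∞) {F G : ℕ → En n → ℝ≥0∞} (hFG : F ≤ G) :
    mixedModular q p F ≤ mixedModular q p G :=
  ENNReal.tsum_le_tsum fun j => mixedModularTerm_mono q p (hFG j)

theorem mixedModular_const_mul_le {n : ℕ} {q : En n → ℝ≥0∞} (p : En n → ℝ≥0∞) {Q : ℝ≥0∞}
    (hq : ∀ x, q x ≠ 0) (hQ : Q ≠ ∞) (hqQ : ∀ᵐ x ∂volume, q x ≤ Q) (G : ℕ → En n → ℝ≥0∞)
    {s : ℝ≥0∞} (hs : 1 ≤ s) (hs' : s ≠ ∞) :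
    mixedModular q p (fun j x => s * G j x) ≤ s ^ Q.toReal * mixedModular q p G := by
  rw [mixedModular_eq_tsum, mixedModular_eq_tsum, ← ENNReal.tsum_mul_left]
  exact ENNReal.tsum_le_tsum fun j => mixedModularTerm_const_mul_le p hq hQ hqQ (G j) hs hs'


theorem ENNReal.continuousOn_Ioi_of_antitoneOn_of_le_rpow_mul {S : ℝ → ℝ≥0∞} {Q : ℝ}
    (hQ : 0 ≤ Q) (hS : AntitoneOn S (Ioi 0))
    (hSQ : ∀ a b, 0 < a → a ≤ b → S a ≤ ENNReal.ofReal (b / a) ^ Q * S b) :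
    ContinuousOn S (Ioi 0) := by
  set c : ℝ → ℝ → ℝ≥0∞ := fun a b => ENNReal.ofReal (max (a / b) (b / a)) ^ Q
  have hc_comm : ∀ a b : ℝ, c a b = c b a := fun a b => by simp only [c]; rw [max_comm]
  have hSc : ∀ a b : ℝ, 0 < a → 0 < b → S a ≤ c a b * S b := by
    intro a b ha hb
    rcases le_total a b with hab | hba
    · exact (hSQ a b ha hab).trans (by simp only [c]; gcongr; exact le_max_right _ _)
    · have hc : 1 ≤ c a b := ENNReal.one_rpow Q ▸ ENNReal.rpow_le_rpow
        (ENNReal.one_le_ofReal.2 (le_max_of_le_left ((one_le_div hb).2 hba))) hQ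
      exact (hS hb ha hba).trans (le_mul_of_one_le_left' hc)
  rintro μ₀ (hμ₀ : 0 < μ₀)
  have hc_lim : Tendsto (fun μ => c μ μ₀) (𝓝[Ioi 0] μ₀) (𝓝 1) := by
    have hcont : ContinuousAt (fun μ => c μ μ₀) μ₀ := by
      have := ENNReal.continuous_ofReal
      have : μ₀ ≠ 0 := hμ₀.ne'
      fun_prop (disch := assumption)
    have h1 : c μ₀ μ₀ = 1 := by simp [c, div_self hμ₀.ne']
    simpa only [h1] using hcont.tendsto.mono_left nhdsWithin_le_nhds
  have h_upper : Tendsto (fun μ => c μ μ₀ * S μ₀) (𝓝[Ioi 0] μ₀) (𝓝 (S μ₀)) := by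
    simpa using ENNReal.Tendsto.mul_const hc_lim (Or.inl one_ne_zero)
  have h_lower : Tendsto (fun μ => S μ₀ / c μ μ₀) (𝓝[Ioi 0] μ₀) (𝓝 (S μ₀)) := by
    simpa using ENNReal.Tendsto.const_div hc_lim (Or.inl one_ne_top)
  refine tendsto_of_tendsto_of_tendsto_of_le_of_le' h_lower h_upper ?_ ?_
  · filter_upwards [self_mem_nhdsWithin] with μ hμ
    exact ENNReal.div_le_of_le_mul' ((hc_comm μ μ₀) ▸ hSc μ₀ μ hμ₀ hμ)
  · filter_upwards [self_mem_nhdsWithin] with μ hμ using hSc μ μ₀ hμ hμ₀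

theorem ENNReal.ofReal_div_mul_div_ofReal {a b : ℝ} (ha : 0 < a) (hb : 0 < b) (x : ℝ≥0∞) :
    ENNReal.ofReal (b / a) * (x / ENNReal.ofReal b) = x / ENNReal.ofReal a := by
  rw [ENNReal.ofReal_div_of_pos ha, mul_comm, div_eq_mul_inv, div_eq_mul_inv, div_eq_mul_inv,
    mul_assoc, ← mul_assoc (ENNReal.ofReal b)⁻¹,
    ENNReal.inv_mul_cancel (ENNReal.ofReal_pos.2 hb).ne' ENNReal.ofReal_ne_top, one_mul]

theorem stmt4_general {n : ℕ} (p q : En n → ℝ≥0∞) (hq : IsExponent q)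
    (hqb : essSup q volume ≠ ∞)
    (f : ℕ → En n → ℝ) :
    ContinuousOn
      (fun μ : ℝ => mixedModular q p (fun j x => nnAbs (f j) x / ENNReal.ofReal μ))
      (Set.Ioi (0 : ℝ)) := by
  have hq0 : ∀ x, q x ≠ 0 := fun x => (zero_lt_one.trans_le (hq.2 x)).ne'
  refine ENNReal.continuousOn_Ioi_of_antitoneOn_of_le_rpow_mul
    (Q := (essSup q volume).toReal) ENNReal.toReal_nonneg
    (fun a ha b _ hab => mixedModular_mono q p fun j x =>
      ENNReal.div_le_div_left (ENNReal.ofReal_le_ofReal hab) _) fun a b ha hab => ?_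
  have hrescale : (fun j x => nnAbs (f j) x / ENNReal.ofReal a) =
      fun j x => ENNReal.ofReal (b / a) * (nnAbs (f j) x / ENNReal.ofReal b) := by
    simp only [ENNReal.ofReal_div_mul_div_ofReal ha (ha.trans_le hab)]
  rw [hrescale]
  exact mixedModular_const_mul_le p hq0 hqb (ae_le_essSup q) _
    (ENNReal.one_le_ofReal.2 ((one_le_div ha).2 hab)) ENNReal.ofReal_ne_top

/-- continuity of the mixed modular in the scaling parameter when
`p⁺ < ∞` and `q⁺ < ∞`. -/
theorem stmt4 {n : ℕ} (p q : En n → ℝ≥0∞) (hp : IsExponent p) (hq : IsExponent q)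
    (hpb : essSup p volume ≠ ∞) (hqb : essSup q volume ≠ ∞)
    (f : ℕ → En n → ℝ) (hf : ∀ j, Measurable (f j))
    (hmem : mixedNorm q p (fun j => nnAbs (f j)) ≠ ∞) :
    ContinuousOn
      (fun μ : ℝ => mixedModular q p (fun j x => nnAbs (f j) x / ENNReal.ofReal μ))
      (Set.Ioi (0 : ℝ)) :=
  stmt4_general p q hq hqb f
end

section
/- Let p, q : ℝⁿ → [1,∞] be measurable exponents with conjugate exponents p′, q′ (defined pointwise by 1/p + 1/p′ = 1, 1/q + 1/q′ = 1). Then for every (f_j)_{j∈ℕ₀} ∈ ℓ^{q(·)}(L^{p(·)}) and (g_j)_{j∈ℕ₀} ∈ ℓ^{q′(·)}(L^{p′(·)}), one has Σ_{j=0}^∞ ∫_{ℝⁿ} |f_j(x)||g_j(x)| dx ≤ c ‖(f_j)_j‖_{ℓ^{q(·)}(L^{p(·)})} ‖(g_j)_j‖_{ℓ^{q′(·)}(L^{p′(·)})}, with constant c independent of the sequences. -/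
open MeasureTheory ENNReal Filter
open scoped SchwartzMap FourierTransform

/-!
After rescaling, both sequences have mixed modular at most `1`. For admissible `λ`, `μ` in the
infima defining the `j`-th terms, write `f_j = A λ^{1/q}` and `g_j = B μ^{1/q'}`: since
`1/q + 1/q' = 1`, `λ^{1/q} μ^{1/q'} ≤ max λ μ ≤ λ + μ`, and Young's inequality for the functions
`ω_p` gives `A B ≤ ω_p(A) + ω_{p'}(B)`. Integrating, `∫ f_j g_j ≤ 2 (λ + μ)`, and summing over `j`
bounds the left side by `2 (1 + 1)`. Undoing the scaling gives the constant `4`.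

A sequence of mixed norm `0` vanishes almost everywhere (Markov's inequality), which covers the
case `0 · ∞` that the product of norms cannot see.
-/

namespace ENNReal

lemma rpow_mul_rpow_le_add (a b : ℝ≥0∞) {s t : ℝ} (hs : 0 ≤ s) (ht : 0 ≤ t) (hst : s + t = 1) :
    a ^ s * b ^ t ≤ a + b :=
  calc a ^ s * b ^ t ≤ (a ⊔ b) ^ s * (a ⊔ b) ^ t :=
        mul_le_mul' (rpow_le_rpow le_sup_left hs) (rpow_le_rpow le_sup_right ht)
    _ = a ⊔ b := by rw [← rpow_add_of_nonneg _ _ hs ht, hst, rpow_one]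
    _ ≤ a + b := sup_le le_self_add le_add_self

lemma HolderConjugate.toReal_inv_add_toReal_inv (p q : ℝ≥0∞) [p.HolderConjugate q] :
    p⁻¹.toReal + q⁻¹.toReal = 1 := by
  rw [← toReal_add (inv_ne_top.mpr (HolderConjugate.ne_zero p q))
    (inv_ne_top.mpr (HolderConjugate.ne_zero q p)), HolderConjugate.inv_add_inv_eq_one,
    toReal_one]

lemma le_sInf_mul_sInf {a : ℝ≥0∞} {S T : Set ℝ≥0∞} (hS : sInf S ≠ 0) (hT : sInf T ≠ 0)
    (h : ∀ s ∈ S, ∀ t ∈ T, a ≤ s * t) : a ≤ sInf S * sInf T := by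
  rcases eq_or_ne (sInf S) ∞ with hS' | hS'
  · simp [hS', top_mul hT]
  rcases eq_or_ne (sInf T) ∞ with hT' | hT'
  · simp [hT', mul_top hS]
  obtain ⟨s, hs, hs'⟩ := sInf_lt_iff.mp hS'.lt_top
  obtain ⟨t, ht, ht'⟩ := sInf_lt_iff.mp hT'.lt_top
  rw [sInf_eq_iInf', sInf_eq_iInf']
  exact le_iInf_mul_iInf ⟨⟨s, hs⟩, hs'.ne⟩ ⟨⟨t, ht⟩, ht'.ne⟩ fun s t => h s s.2 t t.2

end ENNReal

section Omega

variable {P P' : ℝ≥0∞}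

lemma omegaP_one (t : ℝ≥0∞) : omegaP 1 t = t := by
  simp [omegaP]

lemma omegaP_mono {s t : ℝ≥0∞} (h : s ≤ t) : omegaP P s ≤ omegaP P t := by
  unfold omegaP
  split_ifs with _ hs ht ht
  · exact le_rfl
  · exact le_top
  · exact absurd (h.trans ht) hs
  · exact le_rfl
  · exact rpow_le_rpow h toReal_nonneg

lemma le_omegaP_of_one_lt (hP : 1 ≤ P) {t : ℝ≥0∞} (ht : 1 < t) : t ≤ omegaP P t := by
  unfold omegaP
  split_ifs with hPt ht'
  · exact absurd ht (not_lt.mpr ht')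
  · exact le_top
  · calc t = t ^ (1 : ℝ) := (rpow_one t).symm
      _ ≤ t ^ P.toReal := rpow_le_rpow_of_exponent_le ht.le (by
          simpa using toReal_mono hPt hP)

lemma Measurable.omegaP {α : Type*} [MeasurableSpace α] {p A : α → ℝ≥0∞}
    (hp : Measurable p) (hA : Measurable A) : Measurable fun x => omegaP (p x) (A x) :=
  Measurable.ite (hp (measurableSet_singleton ∞))
    (Measurable.ite (hA measurableSet_Iic) measurable_const measurable_const)
    (hA.pow hp.ennreal_toReal)

lemma mul_le_omegaP_top_add (a b : ℝ≥0∞) : a * b ≤ omegaP ∞ a + b := by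
  by_cases ha : a ≤ 1
  · simpa [omegaP, ha] using mul_le_of_le_one_left' ha
  · simp [omegaP, ha]

lemma mul_le_omegaP_add_omegaP [P.HolderConjugate P'] (a b : ℝ≥0∞) :
    a * b ≤ omegaP P a + omegaP P' b := by
  by_cases hP : P = ∞
  · obtain rfl : P' = 1 := (HolderConjugate.eq_top_iff_eq_one P P').mp hP
    simpa [hP, omegaP_one] using mul_le_omegaP_top_add a b
  by_cases hP' : P' = ∞
  · obtain rfl : P = 1 := (HolderConjugate.eq_top_iff_eq_one P' P).mp hP'
    simpa [hP', omegaP_one, mul_comm, add_comm] using mul_le_omegaP_top_add b a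
  have hPP' := HolderConjugate.toReal_of_ne_top hP hP'
  calc a * b
        ≤ a ^ P.toReal / ENNReal.ofReal P.toReal + b ^ P'.toReal / ENNReal.ofReal P'.toReal :=
          young_inequality a b hPP'
    _ ≤ a ^ P.toReal + b ^ P'.toReal := by
        gcongr <;> refine div_le_of_le_mul (le_mul_of_one_le_right' (one_le_ofReal.mpr ?_))
        exacts [hPP'.lt.le, hPP'.symm.lt.le]
    _ = omegaP P a + omegaP P' b := by simp [omegaP, hP, hP']

lemma mul_le_add_mul_omegaP_add_omegaP [P.HolderConjugate P'] {Q Q' : ℝ≥0∞}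
    [Q.HolderConjugate Q'] {lam mu : ℝ≥0∞} (hlam : lam ≠ 0) (hlam' : lam ≠ ∞) (hmu : mu ≠ 0)
    (hmu' : mu ≠ ∞) (a b : ℝ≥0∞) :
    a * b ≤ (lam + mu) *
      (omegaP P (a / lam ^ (Q⁻¹).toReal) + omegaP P' (b / mu ^ (Q'⁻¹).toReal)) := by
  set s := (Q⁻¹).toReal
  set t := (Q'⁻¹).toReal
  have ha : a = a / lam ^ s * lam ^ s :=
    (ENNReal.div_mul_cancel (rpow_pos (pos_iff_ne_zero.mpr hlam) hlam').ne'
      (rpow_ne_top_of_nonneg toReal_nonneg hlam')).symm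
  have hb : b = b / mu ^ t * mu ^ t :=
    (ENNReal.div_mul_cancel (rpow_pos (pos_iff_ne_zero.mpr hmu) hmu').ne'
      (rpow_ne_top_of_nonneg toReal_nonneg hmu')).symm
  calc a * b = (a / lam ^ s * (b / mu ^ t)) * (lam ^ s * mu ^ t) := by
        conv_lhs => rw [ha, hb]
        ring
    _ ≤ (omegaP P (a / lam ^ s) + omegaP P' (b / mu ^ t)) * (lam + mu) :=
        mul_le_mul' (mul_le_omegaP_add_omegaP _ _) (rpow_mul_rpow_le_add lam mu toReal_nonneg
          toReal_nonneg (HolderConjugate.toReal_inv_add_toReal_inv Q Q'))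
    _ = _ := mul_comm _ _

end Omega

section Modular

variable {n : ℕ}

lemma rhoP_mono (p : En n → ℝ≥0∞) {F G : En n → ℝ≥0∞} (h : ∀ x, F x ≤ G x) :
    rhoP p F ≤ rhoP p G :=
  lintegral_mono fun x => omegaP_mono (h x)

lemma measure_lt_eq_zero_of_forall_rhoP_div_le_one {p F : En n → ℝ≥0∞} (hp : ∀ x, 1 ≤ p x)
    (hF : Measurable F) (h : ∀ c, 0 < c → rhoP p (fun x => F x / c) ≤ 1) {t : ℝ≥0∞}
    (ht : t ≠ 0) : volume {x | t < F x} = 0 := by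
  rcases eq_or_ne t ∞ with rfl | ht'
  · simp
  by_contra hne
  obtain ⟨N, hN⟩ := exists_nat_mul_gt hne one_ne_top
  have hN1 : (1 : ℝ≥0∞) ≤ N := by
    rcases N.eq_zero_or_pos with rfl | hN0
    · simp at hN
    · exact_mod_cast hN0
  have hN0 : (N : ℝ≥0∞) ≠ 0 := (zero_lt_one.trans_le hN1).ne'
  set c := t / N
  have hc0 : 0 < c := ENNReal.div_pos ht (natCast_ne_top N)
  have hc : c ≠ ∞ := div_ne_top ht' hN0
  -- Markov's inequality at height `N`, since `ω_p(s) ≥ s` once `s > 1`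
  have hind : {x | t < F x}.indicator (fun _ => (N : ℝ≥0∞)) ≤
      fun x => omegaP (p x) (F x / c) := by
    intro x
    by_cases hx : t < F x
    · have hNx : (N : ℝ≥0∞) < F x / c := by
        rwa [ENNReal.lt_div_iff_mul_lt (Or.inl hc0.ne') (Or.inl hc),
          ENNReal.mul_div_cancel hN0 (natCast_ne_top N)]
      simpa [hx] using hNx.le.trans (le_omegaP_of_one_lt (hp x) (hN1.trans_lt hNx))
    · simp [hx]
  have hle : (N : ℝ≥0∞) * volume {x | t < F x} ≤ 1 :=
    calc (N : ℝ≥0∞) * volume {x | t < F x}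
        = ∫⁻ x, {x | t < F x}.indicator (fun _ => (N : ℝ≥0∞)) x :=
          (lintegral_indicator_const (measurableSet_lt measurable_const hF) _).symm
      _ ≤ rhoP p (fun x => F x / c) := lintegral_mono hind
      _ ≤ 1 := h c hc0
  exact not_lt.mpr hle hN

lemma ae_eq_zero_of_forall_rhoP_div_le_one {p F : En n → ℝ≥0∞} (hp : ∀ x, 1 ≤ p x)
    (hF : Measurable F) (h : ∀ c, 0 < c → rhoP p (fun x => F x / c) ≤ 1) :
    F =ᵐ[volume] 0 := by
  have hsub : {x | F x ≠ 0} ⊆ ⋃ k : ℕ, {x | (k : ℝ≥0∞)⁻¹ < F x} :=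
    fun x hx => Set.mem_iUnion.mpr (exists_inv_nat_lt hx)
  exact ae_iff.mpr <| measure_mono_null hsub <| measure_iUnion_null fun k =>
    measure_lt_eq_zero_of_forall_rhoP_div_le_one hp hF h
      (ENNReal.inv_ne_zero.mpr (natCast_ne_top k))

lemma rhoP_div_two_mul_le_one_of_mixedModular_le_one {p q : En n → ℝ≥0∞} (hq : ∀ x, 1 ≤ q x)
    {F : ℕ → En n → ℝ≥0∞} {m : ℝ≥0∞} (h : mixedModular q p (fun j x => F j x / m) ≤ 1)
    (j : ℕ) : rhoP p (fun x => F j x / (2 * m)) ≤ 1 := by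
  have hj : sInf {l : ℝ≥0∞ | 0 < l ∧
      rhoP p (fun x => F j x / m / l ^ ((q x)⁻¹).toReal) ≤ 1} < 2 :=
    ((ENNReal.le_tsum j).trans h).trans_lt one_lt_two
  obtain ⟨l, ⟨-, hl⟩, hl2⟩ := sInf_lt_iff.mp hj
  refine (rhoP_mono p fun x => ?_).trans hl
  have hq1 : ((q x)⁻¹).toReal ≤ 1 := by
    simpa using toReal_mono one_ne_top (ENNReal.inv_le_one.mpr (hq x))
  have hl2' : l ^ ((q x)⁻¹).toReal ≤ 2 :=
    calc l ^ ((q x)⁻¹).toReal ≤ 2 ^ ((q x)⁻¹).toReal := rpow_le_rpow hl2.le toReal_nonneg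
      _ ≤ 2 ^ (1 : ℝ) := rpow_le_rpow_of_exponent_le one_le_two hq1
      _ = 2 := rpow_one 2
  calc F j x / (2 * m) = F j x / m / 2 := by
        rw [div_eq_mul_inv, div_eq_mul_inv, div_eq_mul_inv, mul_assoc, mul_comm 2 m,
          ENNReal.mul_inv (Or.inr ofNat_ne_top) (Or.inr two_ne_zero)]
    _ ≤ F j x / m / l ^ ((q x)⁻¹).toReal := ENNReal.div_le_div_left hl2' _

lemma ae_eq_zero_of_mixedNorm_eq_zero {p q : En n → ℝ≥0∞} (hp : ∀ x, 1 ≤ p x)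
    (hq : ∀ x, 1 ≤ q x) {F : ℕ → En n → ℝ≥0∞} (hF : ∀ j, Measurable (F j))
    (h0 : mixedNorm q p F = 0) (j : ℕ) : F j =ᵐ[volume] 0 := by
  refine ae_eq_zero_of_forall_rhoP_div_le_one hp (hF j) fun c hc0 => ?_
  obtain ⟨m, ⟨-, hm⟩, hmc⟩ := sInf_lt_iff.mp (h0 ▸ ENNReal.half_pos hc0.ne' :
    mixedNorm q p F < c / 2)
  refine (rhoP_mono p fun x => ENNReal.div_le_div_left ?_ _).trans
    (rhoP_div_two_mul_le_one_of_mixedModular_le_one hq hm j)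
  calc 2 * m ≤ 2 * (c / 2) := by gcongr
    _ = c := ENNReal.mul_div_cancel two_ne_zero ofNat_ne_top

end Modular

section MixedHolder

variable {n : ℕ} {p p' q q' : En n → ℝ≥0∞}

lemma lintegral_mul_le_two_mul_add (hp : Measurable p) (hq : Measurable q)
    (hpc : ∀ x, (p x).HolderConjugate (p' x)) (hqc : ∀ x, (q x).HolderConjugate (q' x))
    {F G : En n → ℝ≥0∞} (hF : Measurable F) {lam mu : ℝ≥0∞} (hlam : lam ≠ 0) (hmu : mu ≠ 0)
    (hFlam : rhoP p (fun x => F x / lam ^ ((q x)⁻¹).toReal) ≤ 1)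
    (hGmu : rhoP p' (fun x => G x / mu ^ ((q' x)⁻¹).toReal) ≤ 1) :
    ∫⁻ x, F x * G x ≤ 2 * (lam + mu) := by
  rcases eq_or_ne lam ∞ with rfl | hlam'
  · simp [mul_top]
  rcases eq_or_ne mu ∞ with rfl | hmu'
  · simp [mul_top]
  have hpoint : ∀ x, F x * G x ≤ (lam + mu) * (omegaP (p x) (F x / lam ^ ((q x)⁻¹).toReal) +
      omegaP (p' x) (G x / mu ^ ((q' x)⁻¹).toReal)) := fun x =>
    have := hpc x
    have := hqc x
    mul_le_add_mul_omegaP_add_omegaP hlam hlam' hmu hmu' _ _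
  calc ∫⁻ x, F x * G x ≤ (lam + mu) * (rhoP p (fun x => F x / lam ^ ((q x)⁻¹).toReal) +
        rhoP p' (fun x => G x / mu ^ ((q' x)⁻¹).toReal)) := by
        have hA : Measurable fun x => F x / lam ^ ((q x)⁻¹).toReal :=
          hF.div (measurable_const.pow hq.inv.ennreal_toReal)
        rw [rhoP, rhoP, ← lintegral_add_left (hp.omegaP hA), ← lintegral_const_mul' _ _
          (add_ne_top.mpr ⟨hlam', hmu'⟩)]
        exact lintegral_mono hpoint
    _ ≤ (lam + mu) * (1 + 1) := by gcongr
    _ = 2 * (lam + mu) := by ring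

lemma tsum_lintegral_mul_le_two_mul_mixedModular_add (hp : Measurable p) (hq : Measurable q)
    (hpc : ∀ x, (p x).HolderConjugate (p' x)) (hqc : ∀ x, (q x).HolderConjugate (q' x))
    {F G : ℕ → En n → ℝ≥0∞} (hF : ∀ j, Measurable (F j)) :
    ∑' j, ∫⁻ x, F j x * G j x ≤ 2 * (mixedModular q p F + mixedModular q' p' G) := by
  rw [mixedModular, mixedModular, ← ENNReal.tsum_add, ← ENNReal.tsum_mul_left]
  refine ENNReal.tsum_le_tsum fun j => ?_
  rw [← ENNReal.div_le_iff' two_ne_zero ofNat_ne_top, sInf_eq_iInf, sInf_eq_iInf]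
  exact le_iInf₂_add_iInf₂ fun l hl m hm => (ENNReal.div_le_iff' two_ne_zero ofNat_ne_top).mpr
    (lintegral_mul_le_two_mul_add hp hq hpc hqc (hF j) hl.1.ne' hm.1.ne' hl.2 hm.2)

lemma tsum_lintegral_mul_le_four_mul_of_mixedModular_le_one (hp : Measurable p)
    (hq : Measurable q) (hpc : ∀ x, (p x).HolderConjugate (p' x))
    (hqc : ∀ x, (q x).HolderConjugate (q' x)) {F G : ℕ → En n → ℝ≥0∞}
    (hF : ∀ j, Measurable (F j)) {m m' : ℝ≥0∞} (hm : m ≠ 0) (hm' : m' ≠ 0)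
    (hFm : mixedModular q p (fun j x => F j x / m) ≤ 1)
    (hGm : mixedModular q' p' (fun j x => G j x / m') ≤ 1) :
    ∑' j, ∫⁻ x, F j x * G j x ≤ 4 * (m * m') := by
  rcases eq_or_ne m ∞ with rfl | hmt
  · simp [top_mul hm', mul_top]
  rcases eq_or_ne m' ∞ with rfl | hmt'
  · simp [mul_top hm]
  have hscale : ∀ j, ∫⁻ x, F j x * G j x = m * m' * ∫⁻ x, F j x / m * (G j x / m') := by
    intro j
    rw [← lintegral_const_mul' _ _ (mul_ne_top hmt hmt')]
    refine lintegral_congr fun x => ?_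
    conv_lhs => rw [← ENNReal.mul_div_cancel hm hmt (b := F j x),
      ← ENNReal.mul_div_cancel hm' hmt' (b := G j x)]
    ring
  calc ∑' j, ∫⁻ x, F j x * G j x = m * m' * ∑' j, ∫⁻ x, F j x / m * (G j x / m') := by
        simp_rw [hscale]
        exact ENNReal.tsum_mul_left
    _ ≤ m * m' * (2 * (1 + 1)) := by
        gcongr
        exact (tsum_lintegral_mul_le_two_mul_mixedModular_add hp hq hpc hqc
          fun j => (hF j).div_const m).trans (by gcongr)
    _ = 4 * (m * m') := by ring

end MixedHolder

theorem stmt5_general {n : ℕ} (p q p' q' : En n → ℝ≥0∞)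
    (hp : IsExponent p) (hq : IsExponent q)
    (hpc : ∀ x, (p x)⁻¹ + (p' x)⁻¹ = 1) (hqc : ∀ x, (q x)⁻¹ + (q' x)⁻¹ = 1) :
    ∃ c : ℝ≥0∞, c ≠ ∞ ∧ ∀ f g : ℕ → En n → ℝ,
      (∀ j, Measurable (f j)) → (∀ j, Measurable (g j)) →
      ∑' j, ∫⁻ x, nnAbs (f j) x * nnAbs (g j) x ≤
        c * mixedNorm q p (fun j => nnAbs (f j)) * mixedNorm q' p' (fun j => nnAbs (g j)) := by
  have hpc' : ∀ x, (p x).HolderConjugate (p' x) := fun x => holderConjugate_iff.mpr (hpc x)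
  have hqc' : ∀ x, (q x).HolderConjugate (q' x) := fun x => holderConjugate_iff.mpr (hqc x)
  refine ⟨4, ofNat_ne_top, fun f g hf hg => ?_⟩
  set F := fun j => nnAbs (f j)
  set G := fun j => nnAbs (g j)
  have hF : ∀ j, Measurable (F j) := fun j => (hf j).abs.ennreal_ofReal
  have hG : ∀ j, Measurable (G j) := fun j => (hg j).abs.ennreal_ofReal
  have hzero : (∀ j, (fun x => F j x * G j x) =ᵐ[volume] 0) →
      ∑' j, ∫⁻ x, F j x * G j x ≤ 0 := fun h =>
    (ENNReal.tsum_eq_zero.mpr fun j => (lintegral_congr_ae (h j)).trans lintegral_zero).le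
  by_cases hM : mixedNorm q p F = 0
  · refine (hzero fun j => ?_).trans zero_le
    filter_upwards [ae_eq_zero_of_mixedNorm_eq_zero hp.2 hq.2 hF hM j] with x hx
    simp [hx]
  by_cases hM' : mixedNorm q' p' G = 0
  · refine (hzero fun j => ?_).trans zero_le
    filter_upwards [ae_eq_zero_of_mixedNorm_eq_zero (fun x => HolderConjugate.one_le (p' x) (p x))
      (fun x => HolderConjugate.one_le (q' x) (q x)) hG hM' j] with x hx
    simp [hx]
  rw [mul_assoc, ← ENNReal.div_le_iff' four_ne_zero ofNat_ne_top]
  exact ENNReal.le_sInf_mul_sInf hM hM' fun m hm m' hm' => ENNReal.div_le_of_le_mul'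
    (tsum_lintegral_mul_le_four_mul_of_mixedModular_le_one hp.1 hq.1 hpc' hqc' hF hm.1.ne'
      hm'.1.ne' hm.2 hm'.2)

/-- Hölder-type inequality for the mixed Lebesgue-sequence spaces. -/
theorem stmt5 {n : ℕ} (p q p' q' : En n → ℝ≥0∞)
    (hp : IsExponent p) (hq : IsExponent q) (hp' : Measurable p') (hq' : Measurable q')
    (hpc : ∀ x, (p x)⁻¹ + (p' x)⁻¹ = 1) (hqc : ∀ x, (q x)⁻¹ + (q' x)⁻¹ = 1) :
    ∃ c : ℝ≥0∞, c ≠ ∞ ∧ ∀ f g : ℕ → En n → ℝ,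
      (∀ j, Measurable (f j)) → (∀ j, Measurable (g j)) →
      ∑' j, ∫⁻ x, nnAbs (f j) x * nnAbs (g j) x ≤
        c * mixedNorm q p (fun j => nnAbs (f j)) * mixedNorm q' p' (fun j => nnAbs (g j)) :=
  stmt5_general p q p' q' hp hq hpc hqc
end

section
/- Let p with p⁺ < ∞, q : ℝⁿ → [1,∞] measurable, and let (f_j)_j ∈ ℓ^{q(·)}(L^{p(·)}) be nonnegative with K := ‖(f_j)_j‖ > 0 and each f_j ≠ 0. Define β_j := inf{λ_j > 0 : ρ_{p(·)}(f_j/(K λ_j^{1/q(·)})) ≤ 1}. Then Σ_{j=0}^∞ β_j = 1 and ρ_{p(·)}(f_j/(K β_j^{1/q(·)})) = 1 for every j ∈ ℕ₀. -/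
open MeasureTheory ENNReal Filter
open scoped SchwartzMap FourierTransform

open Topology

/-!
Both claims come from one observation about a modular `φ` on `[0, ∞]` that scales like
`φ x ≤ c ^ r * φ (c * x)` for `c ≥ 1`: at `b = inf {x > 0 | φ x ≤ 1}` with `0 < b < ∞` one has
`φ b ≤ 1`, and `φ b < 1` is impossible because `b / c` would then be admissible for some `c > 1`.
For the sum `m ↦ ∑ β_j(m)` of the mixed modular (whose infimum is `K`) the scaling holds with
`r = q⁺`, and for `λ ↦ ρ_{p(·)}(f_j / (K λ^{1/q(·)}))` with `r = p⁺`. In the latter case `φ b ≤ 1`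
is right continuity (monotone convergence), and `β_j > 0` because the modular is infinite at `λ = 0`
when `f_j ≠ 0`.
-/

lemma omegaP_mono_s7 (P : ℝ≥0∞) : Monotone (omegaP P) := by
  intro s t hst
  unfold omegaP
  split_ifs with hP hs ht ht
  · exact le_rfl
  · exact zero_le
  · exact absurd (hst.trans ht) hs
  · exact le_rfl
  · exact ENNReal.rpow_le_rpow hst ENNReal.toReal_nonneg

lemma omegaP_top {P : ℝ≥0∞} (hP : P ≠ 0) : omegaP P ∞ = ∞ := by
  unfold omegaP
  split_ifs with hPt h
  · exact absurd h (by simp)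
  · rfl
  · exact ENNReal.top_rpow_of_pos (ENNReal.toReal_pos hP hPt)

lemma omegaP_iSup {ι : Sort*} {P : ℝ≥0∞} (hP : P ≠ 0) (t : ι → ℝ≥0∞) :
    omegaP P (⨆ i, t i) = ⨆ i, omegaP P (t i) := by
  by_cases hPt : P = ∞
  · simp only [omegaP, if_pos hPt]
    by_cases h : ⨆ i, t i ≤ 1
    · simp [h, fun i => (le_iSup t i).trans h]
    · obtain ⟨i, hi⟩ := lt_iSup_iff.mp (not_le.mp h)
      rw [if_neg h]
      exact (top_le_iff.mp (le_iSup_of_le i (by rw [if_neg hi.not_ge]))).symm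
  · simp only [omegaP, if_neg hPt]
    exact (ENNReal.orderIsoRpow _ (ENNReal.toReal_pos hP hPt)).map_iSup t

lemma omegaP_mul_rpow_le {P t c : ℝ≥0∞} {s R : ℝ} (hP : P ≠ ∞) (hc : 1 ≤ c)
    (h : s * P.toReal ≤ R) : omegaP P (t * c ^ s) ≤ c ^ R * omegaP P t := by
  simp only [omegaP, if_neg hP]
  rw [ENNReal.mul_rpow_of_nonneg _ _ ENNReal.toReal_nonneg, ← ENNReal.rpow_mul, mul_comm]
  exact mul_le_mul_left (ENNReal.rpow_le_rpow_of_exponent_le hc h) _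

lemma measurable_omegaP {α : Type*} [MeasurableSpace α] {p G : α → ℝ≥0∞}
    (hp : Measurable p) (hG : Measurable G) : Measurable fun x => omegaP (p x) (G x) := by
  unfold omegaP
  refine Measurable.ite (hp (measurableSet_singleton ∞)) ?_ (hG.pow hp.ennreal_toReal)
  exact Measurable.ite (hG measurableSet_Iic) measurable_const measurable_const

noncomputable def luxemburgInf (φ : ℝ≥0∞ → ℝ≥0∞) : ℝ≥0∞ := sInf {x | 0 < x ∧ φ x ≤ 1}

section LuxemburgInf

variable {φ : ℝ≥0∞ → ℝ≥0∞}

lemma luxemburgInf_le {x : ℝ≥0∞} (hx : 0 < x) (h : φ x ≤ 1) : luxemburgInf φ ≤ x :=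
  sInf_le ⟨hx, h⟩

lemma exists_lt_of_luxemburgInf_lt {y : ℝ≥0∞} (h : luxemburgInf φ < y) :
    ∃ x, 0 < x ∧ φ x ≤ 1 ∧ x < y := by
  obtain ⟨x, ⟨hx0, hx1⟩, hxy⟩ := sInf_lt_iff.mp h
  exact ⟨x, hx0, hx1, hxy⟩

lemma Antitone.apply_le_one_of_luxemburgInf_lt (hφ : Antitone φ) {y : ℝ≥0∞}
    (h : luxemburgInf φ < y) : φ y ≤ 1 := by
  obtain ⟨x, -, hx1, hxy⟩ := exists_lt_of_luxemburgInf_lt h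
  exact (hφ hxy.le).trans hx1

lemma exists_one_lt_rpow_le (r : ℝ) {y : ℝ≥0∞} (hy : 1 < y) :
    ∃ c : ℝ≥0∞, 1 < c ∧ c ≠ ∞ ∧ c ^ r ≤ y := by
  have hnhds : ∀ᶠ c in 𝓝 (1 : ℝ≥0∞), c ^ r < y :=
    ENNReal.continuous_rpow_const.continuousAt.eventually_lt continuousAt_const (by simpa using hy)
  obtain ⟨u, hu1, hu⟩ := exists_Ico_subset_of_mem_nhds hnhds ⟨∞, ENNReal.one_lt_top⟩
  obtain ⟨c, h1c, hcu⟩ := exists_between hu1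
  exact ⟨c, h1c, hcu.ne_top, (hu ⟨h1c.le, hcu⟩).le⟩

/- An admissible point `x ∈ [b, c b)` gives `φ b ≤ c ^ r`; then let `c ↓ 1`. -/
lemma apply_luxemburgInf_le_one {r : ℝ} (hr : 0 ≤ r)
    (hφ : ∀ c x, 1 ≤ c → c ≠ ∞ → φ x ≤ c ^ r * φ (c * x))
    (h0 : luxemburgInf φ ≠ 0) (ht : luxemburgInf φ ≠ ∞) : φ (luxemburgInf φ) ≤ 1 := by
  set b := luxemburgInf φ
  refine le_of_forall_gt_imp_ge_of_dense fun y hy => ?_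
  obtain ⟨c, hc1, hc, hcy⟩ := exists_one_lt_rpow_le r hy
  have hbc : b < c * b := by simpa using ENNReal.mul_lt_mul_left h0 ht hc1
  obtain ⟨x, hx0, hx1, hxc⟩ := exists_lt_of_luxemburgInf_lt hbc
  have hxt : x ≠ ∞ := (hxc.trans_le le_top).ne_top
  have hd1 : 1 ≤ x / b :=
    (ENNReal.le_div_iff_mul_le (Or.inl h0) (Or.inl ht)).2 (by simpa using luxemburgInf_le hx0 hx1)
  calc φ b ≤ (x / b) ^ r * φ (x / b * b) := hφ _ _ hd1 (ENNReal.div_ne_top hxt h0)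
    _ = (x / b) ^ r * φ x := by rw [ENNReal.div_mul_cancel h0 ht]
    _ ≤ c ^ r * 1 := mul_le_mul' (ENNReal.rpow_le_rpow (ENNReal.div_le_of_le_mul hxc.le) hr) hx1
    _ ≤ y := by rwa [mul_one]

/- If `φ b < 1`, then `b / c` would still be admissible for some `c > 1`. -/
lemma apply_luxemburgInf_eq_one {r : ℝ}
    (hφ : ∀ c x, 1 ≤ c → c ≠ ∞ → φ x ≤ c ^ r * φ (c * x))
    (h0 : luxemburgInf φ ≠ 0) (ht : luxemburgInf φ ≠ ∞) (hle : φ (luxemburgInf φ) ≤ 1) :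
    φ (luxemburgInf φ) = 1 := by
  set b := luxemburgInf φ
  refine le_antisymm hle (not_lt.mp fun hlt => ?_)
  obtain ⟨c, hc1, hc, hcφ⟩ := exists_one_lt_rpow_le r (ENNReal.one_lt_inv.2 hlt)
  have hc0 : c ≠ 0 := (zero_lt_one.trans hc1).ne'
  have hadm : φ (b / c) ≤ 1 :=
    calc φ (b / c) ≤ c ^ r * φ (c * (b / c)) := hφ _ _ hc1.le hc
      _ = c ^ r * φ b := by rw [ENNReal.mul_div_cancel hc0 hc]
      _ ≤ (φ b)⁻¹ * φ b := mul_le_mul_left hcφ _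
      _ ≤ 1 := ENNReal.inv_mul_le_one _
  have hlt : b / c < b :=
    ENNReal.div_lt_of_lt_mul (by simpa [mul_comm] using ENNReal.mul_lt_mul_left h0 ht hc1)
  exact hlt.not_ge (luxemburgInf_le (ENNReal.div_pos h0 hc) hadm)

end LuxemburgInf

/- With `G = |f_j|` and `m = K`, `luxemburgInf (rhoScaled p q G m)` is the paper's `β_j`. -/
noncomputable def rhoScaled {n : ℕ} (p q G : En n → ℝ≥0∞) (m l : ℝ≥0∞) : ℝ≥0∞ :=
  rhoP p (fun x => G x / (m * l ^ ((q x)⁻¹).toReal))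

lemma iSup_div_mul_rpow_add_inv {g m : ℝ≥0∞} (hm0 : m ≠ 0) (hm : m ≠ ∞) {r : ℝ} (hr : 0 ≤ r)
    (l : ℝ≥0∞) : ⨆ k : ℕ, g / (m * (l + (k : ℝ≥0∞)⁻¹) ^ r) = g / (m * l ^ r) := by
  have hinf : ⨅ k : ℕ, (l + (k : ℝ≥0∞)⁻¹) ^ r = l ^ r := by
    rcases hr.eq_or_lt with rfl | hr
    · simp
    · have hanti : Antitone fun k : ℕ => (k : ℝ≥0∞)⁻¹ :=
        fun i j hij => ENNReal.inv_le_inv.2 (Nat.cast_le.2 hij)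
      have h := (ENNReal.orderIsoRpow r hr).map_iInf fun k : ℕ => l + (k : ℝ≥0∞)⁻¹
      simp only [ENNReal.orderIsoRpow_apply] at h
      rw [← h, ← ENNReal.add_iInf, iInf_eq_of_tendsto hanti ENNReal.tendsto_inv_nat_nhds_zero,
        add_zero]
  simp only [div_eq_mul_inv, ← ENNReal.mul_iSup, ← ENNReal.inv_iInf,
    ← ENNReal.mul_iInf_of_ne hm0 hm, hinf]

section RhoScaled

variable {n : ℕ} {p q G : En n → ℝ≥0∞}

lemma measurable_omegaP_div (hp : Measurable p) (hq : Measurable q) (hG : Measurable G)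
    (m l : ℝ≥0∞) : Measurable fun x => omegaP (p x) (G x / (m * l ^ ((q x)⁻¹).toReal)) :=
  measurable_omegaP hp (hG.div (measurable_const.mul (measurable_const.pow hq.inv.ennreal_toReal)))

lemma rhoScaled_antitone (m : ℝ≥0∞) : Antitone (rhoScaled p q G m) := by
  intro l l' hl
  unfold rhoScaled rhoP
  exact lintegral_mono fun x => omegaP_mono_s7 _ (ENNReal.div_le_div_left
    (mul_le_mul_right (ENNReal.rpow_le_rpow hl ENNReal.toReal_nonneg) m) _)

lemma rhoScaled_eq_iSup (hp : Measurable p) (hp0 : ∀ x, p x ≠ 0) (hq : Measurable q)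
    (hG : Measurable G) {m : ℝ≥0∞} (hm0 : m ≠ 0) (hm : m ≠ ∞) (l : ℝ≥0∞) :
    rhoScaled p q G m l = ⨆ k : ℕ, rhoScaled p q G m (l + (k : ℝ≥0∞)⁻¹) := by
  have hmono : Monotone fun (k : ℕ) x =>
      omegaP (p x) (G x / (m * (l + (k : ℝ≥0∞)⁻¹) ^ ((q x)⁻¹).toReal)) :=
    fun i j hij x => omegaP_mono_s7 _ (ENNReal.div_le_div_left (by gcongr) _)
  simp only [rhoScaled, rhoP]
  rw [← lintegral_iSup (fun k => measurable_omegaP_div hp hq hG m _) hmono]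
  refine lintegral_congr fun x => ?_
  rw [← omegaP_iSup (hp0 x), iSup_div_mul_rpow_add_inv hm0 hm ENNReal.toReal_nonneg]

lemma rhoScaled_luxemburgInf_le_one (hp : Measurable p) (hp0 : ∀ x, p x ≠ 0) (hq : Measurable q)
    (hG : Measurable G) {m : ℝ≥0∞} (hm0 : m ≠ 0) (hm : m ≠ ∞)
    (ht : luxemburgInf (rhoScaled p q G m) ≠ ∞) :
    rhoScaled p q G m (luxemburgInf (rhoScaled p q G m)) ≤ 1 := by
  rw [rhoScaled_eq_iSup hp hp0 hq hG hm0 hm]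
  exact iSup_le fun k => (rhoScaled_antitone m).apply_le_one_of_luxemburgInf_lt
    (ENNReal.lt_add_right ht (by simp))

lemma rhoScaled_zero (hp : Measurable p) (hp0 : ∀ x, p x ≠ 0) (hq : Measurable q)
    (hq0 : ∀ x, q x ≠ 0) (hq_fin : ∀ᵐ x, q x ≠ ∞) (hG : Measurable G)
    (hG0 : ¬ G =ᵐ[volume] 0) (m : ℝ≥0∞) : rhoScaled p q G m 0 = ∞ := by
  refine lintegral_eq_top_of_measure_eq_top_ne_zero
    (measurable_omegaP_div hp hq hG m 0).aemeasurable
    fun h => hG0 (ae_iff.2 (measure_mono_null_ae ?_ h))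
  filter_upwards [hq_fin] with x hx (hGx : G x ≠ 0)
  have hr : 0 < ((q x)⁻¹).toReal :=
    ENNReal.toReal_pos (ENNReal.inv_ne_zero.2 hx) (ENNReal.inv_ne_top.2 (hq0 x))
  change omegaP (p x) (G x / (m * 0 ^ ((q x)⁻¹).toReal)) = ∞
  rw [ENNReal.zero_rpow_of_pos hr, mul_zero, ENNReal.div_zero hGx, omegaP_top (hp0 x)]

lemma luxemburgInf_rhoScaled_ne_zero (hp : Measurable p) (hp0 : ∀ x, p x ≠ 0)
    (hq : Measurable q) (hq0 : ∀ x, q x ≠ 0) (hq_fin : ∀ᵐ x, q x ≠ ∞) (hG : Measurable G)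
    (hG0 : ¬ G =ᵐ[volume] 0) {m : ℝ≥0∞} (hm0 : m ≠ 0) (hm : m ≠ ∞) :
    luxemburgInf (rhoScaled p q G m) ≠ 0 := by
  intro h
  have hle := rhoScaled_luxemburgInf_le_one hp hp0 hq hG hm0 hm (h ▸ ENNReal.zero_ne_top)
  rw [h, rhoScaled_zero hp hp0 hq hq0 hq_fin hG hG0 m] at hle
  exact not_le.2 ENNReal.one_lt_top hle

lemma rhoScaled_le_rpow_mul (hpb : essSup p volume ≠ ∞) (hq1 : ∀ x, 1 ≤ q x) {c : ℝ≥0∞}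
    (hc1 : 1 ≤ c) (hc : c ≠ ∞) (m l : ℝ≥0∞) :
    rhoScaled p q G m l ≤ c ^ (essSup p volume).toReal * rhoScaled p q G m (c * l) := by
  rw [rhoScaled, rhoScaled, rhoP, rhoP,
    ← lintegral_const_mul' _ _ (ENNReal.rpow_ne_top_of_nonneg ENNReal.toReal_nonneg hc)]
  refine lintegral_mono_ae ((ENNReal.ae_le_essSup p).mono fun x hpx => ?_)
  have hr1 : ((q x)⁻¹).toReal ≤ 1 :=
    ENNReal.toReal_le_of_le_ofReal zero_le_one (by simpa using ENNReal.inv_le_one.2 (hq1 x))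
  have hr0 : 0 ≤ ((q x)⁻¹).toReal := ENNReal.toReal_nonneg
  generalize ((q x)⁻¹).toReal = r at hr0 hr1 ⊢
  have hcr0 : c ^ r ≠ 0 := (ENNReal.rpow_pos (zero_lt_one.trans_le hc1) hc).ne'
  have hcrt : c ^ r ≠ ∞ := ENNReal.rpow_ne_top_of_nonneg hr0 hc
  have harg : G x / (m * (c * l) ^ r) * c ^ r = G x / (m * l ^ r) := by
    rw [ENNReal.mul_rpow_of_nonneg _ _ hr0, mul_left_comm m (c ^ r),
      mul_comm _ (c ^ r), ← mul_div_assoc, ENNReal.mul_div_mul_left _ _ hcr0 hcrt]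
  rw [← harg]
  exact omegaP_mul_rpow_le (ne_top_of_le_ne_top hpb hpx) hc1
    ((mul_le_of_le_one_left ENNReal.toReal_nonneg hr1).trans (ENNReal.toReal_mono hpb hpx))

lemma rhoScaled_rpow_mul_le (hq0 : ∀ x, q x ≠ 0) (hqb : essSup q volume ≠ ∞) {c : ℝ≥0∞}
    (hc1 : 1 ≤ c) (m l : ℝ≥0∞) :
    rhoScaled p q G m (c ^ (essSup q volume).toReal * l) ≤ rhoScaled p q G (c * m) l := by
  refine lintegral_mono_ae ((ENNReal.ae_le_essSup q).mono fun x hqx => ?_)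
  refine omegaP_mono_s7 _ (ENNReal.div_le_div_left ?_ _)
  have hqr : 1 ≤ (essSup q volume).toReal * ((q x)⁻¹).toReal := by
    have hpos : 0 < (q x).toReal := ENNReal.toReal_pos (hq0 x) (ne_top_of_le_ne_top hqb hqx)
    calc (1 : ℝ) = (q x).toReal * ((q x)⁻¹).toReal := by
          rw [ENNReal.toReal_inv, mul_inv_cancel₀ hpos.ne']
      _ ≤ (essSup q volume).toReal * ((q x)⁻¹).toReal :=
        mul_le_mul_of_nonneg_right (ENNReal.toReal_mono hqb hqx) ENNReal.toReal_nonneg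
  have hr0 : 0 ≤ ((q x)⁻¹).toReal := ENNReal.toReal_nonneg
  generalize ((q x)⁻¹).toReal = r at hr0 hqr ⊢
  calc c * m * l ^ r = m * (c ^ (1 : ℝ) * l ^ r) := by rw [ENNReal.rpow_one]; ring
    _ ≤ m * (c ^ ((essSup q volume).toReal * r) * l ^ r) := by gcongr
    _ = m * (c ^ (essSup q volume).toReal * l) ^ r := by
      rw [ENNReal.mul_rpow_of_nonneg _ _ hr0, ← ENNReal.rpow_mul]

lemma luxemburgInf_rhoScaled_le_rpow_mul (hq0 : ∀ x, q x ≠ 0) (hqb : essSup q volume ≠ ∞)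
    {c : ℝ≥0∞} (hc1 : 1 ≤ c) (hc : c ≠ ∞) (m : ℝ≥0∞) :
    luxemburgInf (rhoScaled p q G m) ≤
      c ^ (essSup q volume).toReal * luxemburgInf (rhoScaled p q G (c * m)) := by
  set d := c ^ (essSup q volume).toReal
  have hd0 : d ≠ 0 := (ENNReal.rpow_pos (zero_lt_one.trans_le hc1) hc).ne'
  have hdt : d ≠ ∞ := ENNReal.rpow_ne_top_of_nonneg ENNReal.toReal_nonneg hc
  rw [mul_comm, ← ENNReal.div_le_iff hd0 hdt]
  refine le_sInf fun l ⟨hl0, hl1⟩ => (ENNReal.div_le_iff hd0 hdt).2 ?_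
  rw [mul_comm]
  exact luxemburgInf_le (ENNReal.mul_pos hd0 hl0.ne')
    ((rhoScaled_rpow_mul_le hq0 hqb hc1 m l).trans hl1)

end RhoScaled

lemma mixedModular_div_eq_tsum {n : ℕ} (q p : En n → ℝ≥0∞) (F : ℕ → En n → ℝ≥0∞) {m : ℝ≥0∞}
    (hm : m ≠ 0) :
    mixedModular q p (fun j x => F j x / m) = ∑' j, luxemburgInf (rhoScaled p q (F j) m) := by
  refine tsum_congr fun j => congrArg sInf (Set.ext fun l => and_congr_right fun hl => ?_)
  have hlr : ∀ x, l ^ ((q x)⁻¹).toReal ≠ 0 := fun x => by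
    simp [ENNReal.rpow_eq_zero_iff, hl.ne', not_lt.2 ENNReal.toReal_nonneg]
  simp only [rhoScaled, div_eq_mul_inv, mul_assoc, ENNReal.mul_inv (Or.inl hm) (Or.inr (hlr _))]

lemma mixedNorm_eq_luxemburgInf {n : ℕ} (q p : En n → ℝ≥0∞) (F : ℕ → En n → ℝ≥0∞) :
    mixedNorm q p F = luxemburgInf fun m => ∑' j, luxemburgInf (rhoScaled p q (F j) m) :=
  congrArg sInf (Set.ext fun m => and_congr_right fun hm => by
    rw [mixedModular_div_eq_tsum q p F hm.ne'])

theorem stmt7_general {n : ℕ} (p q : En n → ℝ≥0∞) (hp : IsExponent p) (hq : IsExponent q)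
    (hpb : essSup p volume ≠ ∞) (hqb : essSup q volume ≠ ∞)
    (f : ℕ → En n → ℝ) (hfm : ∀ j, Measurable (f j))
    (hK : 0 < mixedNorm q p (fun j => nnAbs (f j)))
    (hKfin : mixedNorm q p (fun j => nnAbs (f j)) ≠ ∞)
    (hne : ∀ j, ¬ (f j =ᵐ[volume] 0)) :
    (∑' j, sInf {l : ℝ≥0∞ | 0 < l ∧
        rhoP p (fun x => nnAbs (f j) x /
          (mixedNorm q p (fun j => nnAbs (f j)) * l ^ ((q x)⁻¹).toReal)) ≤ 1}) = 1 ∧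
    ∀ j, rhoP p (fun x => nnAbs (f j) x /
        (mixedNorm q p (fun j => nnAbs (f j)) *
          (sInf {l : ℝ≥0∞ | 0 < l ∧
            rhoP p (fun x => nnAbs (f j) x /
              (mixedNorm q p (fun j => nnAbs (f j)) * l ^ ((q x)⁻¹).toReal)) ≤ 1})
            ^ ((q x)⁻¹).toReal)) = 1 := by
  obtain ⟨hpm, hp1⟩ := hp
  obtain ⟨hqm, hq1⟩ := hq
  have hp0 : ∀ x, p x ≠ 0 := fun x => (zero_lt_one.trans_le (hp1 x)).ne'
  have hq0 : ∀ x, q x ≠ 0 := fun x => (zero_lt_one.trans_le (hq1 x)).ne'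
  have hq_fin : ∀ᵐ x, q x ≠ ∞ := (ENNReal.ae_le_essSup q).mono fun _ => ne_top_of_le_ne_top hqb
  have hG : ∀ j, Measurable (nnAbs (f j)) := fun j => (hfm j).abs.ennreal_ofReal
  have hG0 : ∀ j, ¬ nnAbs (f j) =ᵐ[volume] 0 := fun j h =>
    hne j (h.mono fun x hx => by simpa [nnAbs] using hx)
  set K := mixedNorm q p (fun j => nnAbs (f j)) with hKdef
  change (∑' j, luxemburgInf (rhoScaled p q (nnAbs (f j)) K)) = 1 ∧
    ∀ j, rhoScaled p q (nnAbs (f j)) K (luxemburgInf (rhoScaled p q (nnAbs (f j)) K)) = 1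
  have hsum : ∑' j, luxemburgInf (rhoScaled p q (nnAbs (f j)) K) = 1 := by
    rw [hKdef, mixedNorm_eq_luxemburgInf] at hK hKfin ⊢
    have hscale : ∀ c m : ℝ≥0∞, 1 ≤ c → c ≠ ∞ →
        ∑' j, luxemburgInf (rhoScaled p q (nnAbs (f j)) m) ≤
          c ^ (essSup q volume).toReal * ∑' j, luxemburgInf (rhoScaled p q (nnAbs (f j)) (c * m)) :=
      fun c m hc1 hc => (ENNReal.tsum_le_tsum fun j =>
        luxemburgInf_rhoScaled_le_rpow_mul hq0 hqb hc1 hc m).trans_eq ENNReal.tsum_mul_left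
    exact apply_luxemburgInf_eq_one hscale hK.ne' hKfin
      (apply_luxemburgInf_le_one ENNReal.toReal_nonneg hscale hK.ne' hKfin)
  refine ⟨hsum, fun j => ?_⟩
  have ht : luxemburgInf (rhoScaled p q (nnAbs (f j)) K) ≠ ∞ :=
    ne_top_of_le_ne_top ENNReal.one_ne_top (hsum ▸ ENNReal.le_tsum j)
  exact apply_luxemburgInf_eq_one (fun c l hc1 hc => rhoScaled_le_rpow_mul hpb hq1 hc1 hc K l)
    (luxemburgInf_rhoScaled_ne_zero hpm hp0 hqm hq0 hq_fin (hG j) (hG0 j) hK.ne' hKfin) ht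
    (rhoScaled_luxemburgInf_le_one hpm hp0 hqm (hG j) hK.ne' hKfin ht)

/-- sharp attainment of the mixed norm in the modular when
`p⁺ < ∞` and `q⁺ < ∞`. -/
theorem stmt7 {n : ℕ} (p q : En n → ℝ≥0∞) (hp : IsExponent p) (hq : IsExponent q)
    (hpb : essSup p volume ≠ ∞) (hqb : essSup q volume ≠ ∞)
    (f : ℕ → En n → ℝ) (hfm : ∀ j, Measurable (f j)) (hfnn : ∀ j x, 0 ≤ f j x)
    (hK : 0 < mixedNorm q p (fun j => nnAbs (f j)))
    (hKfin : mixedNorm q p (fun j => nnAbs (f j)) ≠ ∞)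
    (hne : ∀ j, ¬ (f j =ᵐ[volume] 0)) :
    (∑' j, sInf {l : ℝ≥0∞ | 0 < l ∧
        rhoP p (fun x => nnAbs (f j) x /
          (mixedNorm q p (fun j => nnAbs (f j)) * l ^ ((q x)⁻¹).toReal)) ≤ 1}) = 1 ∧
    ∀ j, rhoP p (fun x => nnAbs (f j) x /
        (mixedNorm q p (fun j => nnAbs (f j)) *
          (sInf {l : ℝ≥0∞ | 0 < l ∧
            rhoP p (fun x => nnAbs (f j) x /
              (mixedNorm q p (fun j => nnAbs (f j)) * l ^ ((q x)⁻¹).toReal)) ≤ 1})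
            ^ ((q x)⁻¹).toReal)) = 1 :=
  stmt7_general p q hp hq hpb hqb f hfm hK hKfin hne
end
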